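/- arXiv:1807.07204 — 2 statements merged into one kernel-verified Lean document; each statement's English description precedes it below -/
import Mathlib

section
/- Let v: SL(2,ℤ) → ℂ^× be a group homomorphism with |v(A)| = 1 for all A ∈ SL(2,ℤ) (i.e. a weight-0 multiplier), and let f be holomorphic on ℍ with f(Az) = v(A) f(z) for all A ∈ SL(2,ℤ). Then: (1) if f vanishes around infinity, then f = 0; (2) if f is bounded around infinity, then f is constant in case v is the trivial homomorphism, and f = 0 in case v is nontrivial. -/
/-!
A character `χ` of `SL(2, ℤ)` into a commutative monoid has order dividing 12: the relations
`S⁴ = 1` and `(ST)³ = S²` give `χ(S) χ(T)³ = 1` and `χ(T)¹² = 1`, and `S`, `T` generate.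
So `ker v` has finite index, and a holomorphic `f` with `f ∘ A = v(A) f` that is bounded at
infinity is a weight-`0` modular form for the arithmetic group `ker v`; it is bounded at every
cusp because each `f ∘ A` is a multiple of `f`. Such forms are constant, and a constant `c` with
`c = v(A) c` for some `v(A) ≠ 1` is `0`.
-/

open Complex Filter
open scoped Classical

noncomputable section

namespace MLDE

/-- The upper half-plane, as a subset of `ℂ`. -/
def UHP : Set ℂ := {z : ℂ | 0 < z.im}

/-- `q = e^{2πiz}`. -/
def qq (z : ℂ) : ℂ := Complex.exp (2 * Real.pi * Complex.I * z)

/-- The normalized Eisenstein series `E₂`, via its `q`-expansion. -/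
def E2 : ℂ → ℂ := fun z =>
  1 - 24 * ∑' n : ℕ, ((ArithmeticFunction.sigma 1 (n + 1) : ℕ) : ℂ) * qq z ^ (n + 1)

/-- The normalized Eisenstein series `E₄`, via its `q`-expansion. -/
def E4 : ℂ → ℂ := fun z =>
  1 + 240 * ∑' n : ℕ, ((ArithmeticFunction.sigma 3 (n + 1) : ℕ) : ℂ) * qq z ^ (n + 1)

/-- The normalized Eisenstein series `E₆`, via its `q`-expansion. -/
def E6 : ℂ → ℂ := fun z =>
  1 - 504 * ∑' n : ℕ, ((ArithmeticFunction.sigma 5 (n + 1) : ℕ) : ℂ) * qq z ^ (n + 1)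

/-- The modular group `SL(2, ℤ)`. -/
abbrev SL2Z := Matrix.SpecialLinearGroup (Fin 2) ℤ

/-- The automorphy factor `j(A, z) = cz + d`. -/
def jmat (A : SL2Z) (z : ℂ) : ℂ := (A.1 1 0 : ℤ) * z + (A.1 1 1 : ℤ)

/-- The Möbius action `Az = (az + b)/(cz + d)`. -/
def moeb (A : SL2Z) (z : ℂ) : ℂ := ((A.1 0 0 : ℤ) * z + (A.1 0 1 : ℤ)) / jmat A z

/-- The weight-`k` slash action `(f|_k A)(z) = j(A,z)^{-k} f(Az)`, with principal branch powers. -/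
def slash (k : ℝ) (A : SL2Z) (f : ℂ → ℂ) : ℂ → ℂ :=
  fun z => jmat A z ^ (-(k : ℂ)) * f (moeb A z)

/-- `f` is holomorphic on the upper half-plane. -/
def HolOn (f : ℂ → ℂ) : Prop := DifferentiableOn ℂ f UHP

/-- `f` has at most exponential growth around infinity. -/
def ExpGrowth (f : ℂ → ℂ) : Prop :=
  ∃ C > (0:ℝ), ∃ M > (0:ℝ), ∀ z : ℂ, M < z.im → ‖f z‖ < Real.exp (C * z.im)

/-- `f` is bounded around infinity. -/
def BoundedAtInf (f : ℂ → ℂ) : Prop :=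
  ∃ ε > (0:ℝ), ∃ M > (0:ℝ), ∀ z : ℂ, M < z.im → ‖f z‖ < ε

/-- `f` vanishes around infinity. -/
def VanishAtInf (f : ℂ → ℂ) : Prop :=
  ∀ ε > (0:ℝ), ∃ M > (0:ℝ), ∀ z : ℂ, M < z.im → ‖f z‖ < ε

/-- `f` is a holomorphic modular form of weight `k` on `SL(2, ℤ)`. -/
def IsModularForm (k : ℤ) (f : ℂ → ℂ) : Prop :=
  HolOn f ∧ (∀ A : SL2Z, ∀ z ∈ UHP, f (moeb A z) = jmat A z ^ k * f z) ∧ BoundedAtInf f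

/-- The Ramanujan–Serre derivative `D_k f = f' - (k/12) E₂ f`, where `f' = (2πi)⁻¹ df/dz`. -/
def serreD (k : ℝ) (f : ℂ → ℂ) : ℂ → ℂ :=
  fun z => (2 * (Real.pi : ℂ) * Complex.I)⁻¹ * deriv f z - ((k : ℂ) / 12) * E2 z * f z

/-- Iterated Ramanujan–Serre derivative `D_k^(n) = D_{k+2n-2} ∘ ⋯ ∘ D_{k+2} ∘ D_k`. -/
def serreDIter (k : ℝ) : ℕ → (ℂ → ℂ) → (ℂ → ℂ)
  | 0, f => f
  | n + 1, f => serreD (k + 2 * n) (serreDIter k n f)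

/-- `Σ_k`: the set of holomorphic functions on `ℍ` satisfying some monic MLDE of weight `k`. -/
def SigmaSet (k : ℝ) : Set (ℂ → ℂ) :=
  {f | HolOn f ∧ ∃ n : ℕ, ∃ g : ℕ → (ℂ → ℂ),
    (∀ i : ℕ, 1 ≤ i → i ≤ n → IsModularForm (2 * i) (g i)) ∧
    ∀ z ∈ UHP, serreDIter k n f z +
      ∑ i ∈ Finset.Icc 1 n, g i z * serreDIter k (n - i) f z = 0}


end MLDE

open MatrixGroups UpperHalfPlane ModularForm
open scoped Manifold

namespace ModularGroup

lemma S_pow_four : S ^ 4 = 1 := by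
  ext i j; fin_cases i <;> fin_cases j <;> rfl

lemma S_mul_T_pow_three : (S * T) ^ 3 = S ^ 2 := by
  ext i j; fin_cases i <;> fin_cases j <;> rfl

lemma map_pow_twelve_eq_one {M : Type*} [CommMonoid M] (χ : SL(2, ℤ) →* M) (A : SL(2, ℤ)) :
    χ A ^ 12 = 1 := by
  have hS : χ S ^ 4 = 1 := by rw [← map_pow, S_pow_four, map_one]
  have hST : χ S ^ 3 * χ T ^ 3 = χ S ^ 2 := by
    rw [← mul_pow, ← map_mul, ← map_pow, S_mul_T_pow_three, map_pow]
  have hST' : χ S * χ T ^ 3 = 1 := by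
    calc χ S * χ T ^ 3 = χ S ^ 4 * χ S * χ T ^ 3 := by rw [hS, one_mul]
      _ = χ S ^ 2 * (χ S ^ 3 * χ T ^ 3) := by rw [← pow_succ, ← mul_assoc, ← pow_add]
      _ = 1 := by rw [hST, ← pow_add, hS]
  have hle : Subgroup.closure {S, T} ≤ (χ ^ 12).ker := by
    rw [Subgroup.closure_le]
    rintro _ (rfl | rfl) <;> rw [SetLike.mem_coe, MonoidHom.mem_ker, MonoidHom.pow_apply]
    · rw [show 12 = 4 * 3 by rfl, pow_mul, hS, one_pow]
    · calc χ T ^ 12 = χ S ^ 4 * χ T ^ 12 := by rw [hS, one_mul]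
        _ = (χ S * χ T ^ 3) ^ 4 := by rw [mul_pow, ← pow_mul]
        _ = 1 := by rw [hST', one_pow]
  simpa using hle (SpecialLinearGroup.SL2Z_generators ▸ Subgroup.mem_top A)

instance finiteIndex_ker {R : Type*} [CommRing R] [IsDomain R] (χ : SL(2, ℤ) →* R) :
    χ.ker.FiniteIndex := by
  rw [← MonoidHom.ker_toHomUnits]
  have hle : χ.toHomUnits.range ≤ rootsOfUnity 12 R := by
    rintro _ ⟨A, rfl⟩
    rw [_root_.mem_rootsOfUnity]
    ext
    simp [map_pow_twelve_eq_one]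
  have : Finite χ.toHomUnits.range :=
    Finite.of_injective (Subgroup.inclusion hle) (Subgroup.inclusion_injective hle)
  infer_instance

end ModularGroup

namespace ModularForm

def ofSlashEqSMul (χ : SL(2, ℤ) →* ℂ) (f : ℍ → ℂ) (hf : MDiff f)
    (hχ : ∀ A : SL(2, ℤ), f ∣[(0 : ℤ)] A = χ A • f) (hb : IsBoundedAtImInfty f) :
    ModularForm (χ.ker : Subgroup (GL (Fin 2) ℝ)) 0 where
  toFun := f
  slash_action_eq' γ hγ := by
    obtain ⟨A, hA, rfl⟩ := Subgroup.mem_map.mp hγ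
    exact (hχ A).trans (by rw [MonoidHom.mem_ker.mp hA, one_smul])
  holo' := hf
  bdd_at_cusps' hc := by
    rw [Subgroup.IsArithmetic.isCusp_iff_isCusp_SL2Z] at hc
    rw [OnePoint.isBoundedAt_iff_forall_SL2Z hc]
    intro A _
    rw [hχ]
    exact hb.smul _

theorem exists_eq_const_of_slash_eq_smul (χ : SL(2, ℤ) →* ℂ) (f : ℍ → ℂ) (hf : MDiff f)
    (hχ : ∀ A : SL(2, ℤ), f ∣[(0 : ℤ)] A = χ A • f) (hb : IsBoundedAtImInfty f) :
    ∃ c, f = Function.const ℍ c :=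
  eq_const_of_weight_zero (ofSlashEqSMul χ f hf hχ hb)

end ModularForm

namespace MLDE

lemma coe_smul_eq_moeb (A : SL2Z) (τ : ℍ) : ((A • τ : ℍ) : ℂ) = moeb A τ := by
  rw [UpperHalfPlane.specialLinearGroup_apply]
  simp [moeb, jmat]

lemma moeb_mem (A : SL2Z) {z : ℂ} (hz : z ∈ UHP) : moeb A z ∈ UHP :=
  coe_smul_eq_moeb A ⟨z, hz⟩ ▸ (A • (⟨z, hz⟩ : ℍ)).im_pos

lemma HolOn.mdifferentiable_comp_coe {f : ℂ → ℂ} (hf : HolOn f) : MDiff (f ∘ (↑) : ℍ → ℂ) := by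
  rw [UpperHalfPlane.mdifferentiable_iff]
  exact hf.congr fun z hz => by simp [ofComplex_apply_of_im_pos hz]

lemma BoundedAtInf.isBoundedAtImInfty {f : ℂ → ℂ} (hb : BoundedAtInf f) :
    IsBoundedAtImInfty (f ∘ (↑) : ℍ → ℂ) := by
  obtain ⟨ε, -, M, -, hM⟩ := hb
  rw [isBoundedAtImInfty_iff]
  exact ⟨ε, M + 1, fun τ hτ => (hM τ (by simp; linarith)).le⟩

lemma VanishAtInf.boundedAtInf {f : ℂ → ℂ} (hf : VanishAtInf f) : BoundedAtInf f :=
  ⟨1, one_pos, hf 1 one_pos⟩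

lemma VanishAtInf.eq_zero_of_eqOn_const {f : ℂ → ℂ} (hf : VanishAtInf f) {c : ℂ}
    (hc : ∀ z ∈ UHP, f z = c) : c = 0 := by
  refine norm_le_zero_iff.mp (le_of_forall_pos_lt_add fun ε hε => ?_)
  obtain ⟨M, hM, hfM⟩ := hf ε hε
  have him : M < ((M + 1) * Complex.I).im := by simp
  have hz : (M + 1) * Complex.I ∈ UHP := hM.trans him
  simpa [hc _ hz] using hfM _ him

lemma slash_zero_comp_coe {v : SL2Z →* ℂ} {f : ℂ → ℂ}
    (hmod : ∀ A : SL2Z, ∀ z ∈ UHP, f (moeb A z) = v A * f z) (A : SL2Z) :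
    (f ∘ (↑) : ℍ → ℂ) ∣[(0 : ℤ)] A = v A • (f ∘ (↑)) := by
  ext τ
  simp only [SL_slash_apply, Function.comp_apply, coe_smul_eq_moeb, hmod A τ τ.im_pos, neg_zero,
    zpow_zero, mul_one, Pi.smul_apply, smul_eq_mul]

lemma exists_eqOn_const_of_boundedAtInf (v : SL2Z →* ℂ) {f : ℂ → ℂ} (hf : HolOn f)
    (hmod : ∀ A : SL2Z, ∀ z ∈ UHP, f (moeb A z) = v A * f z) (hb : BoundedAtInf f) :
    ∃ c, ∀ z ∈ UHP, f z = c := by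
  obtain ⟨c, hc⟩ := exists_eq_const_of_slash_eq_smul v _ hf.mdifferentiable_comp_coe
    (slash_zero_comp_coe hmod) hb.isBoundedAtImInfty
  exact ⟨c, fun z hz => congrFun hc ⟨z, hz⟩⟩

lemma eq_zero_of_eqOn_const_of_ne_one {v : SL2Z →* ℂ} {f : ℂ → ℂ}
    (hmod : ∀ A : SL2Z, ∀ z ∈ UHP, f (moeb A z) = v A * f z) (hv : v ≠ 1) {c : ℂ}
    (hc : ∀ z ∈ UHP, f z = c) : c = 0 := by
  obtain ⟨A, hA⟩ : ∃ A, v A ≠ 1 := by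
    by_contra! h
    exact hv (MonoidHom.ext h)
  have hI : Complex.I ∈ UHP := by simp [UHP]
  have hfix : v A * c = c := by
    rw [← hc _ hI, ← hmod A _ hI, hc _ (moeb_mem A hI), hc _ hI]
  by_contra hc0
  exact hA ((mul_eq_right₀ hc0).mp hfix)

theorem weight_zero_multiplier_classification_general
    (v : SL2Z →* ℂ)
    (f : ℂ → ℂ) (hf : HolOn f)
    (hmod : ∀ A : SL2Z, ∀ z ∈ UHP, f (moeb A z) = v A * f z) :
    (VanishAtInf f → ∀ z ∈ UHP, f z = 0) ∧
    (BoundedAtInf f →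
      (v = 1 → ∃ c : ℂ, ∀ z ∈ UHP, f z = c) ∧
      (v ≠ 1 → ∀ z ∈ UHP, f z = 0)) := by
  have hconst := exists_eqOn_const_of_boundedAtInf v hf hmod
  refine ⟨fun hvan z hz => ?_, fun hb => ⟨fun _ => hconst hb, fun hv z hz => ?_⟩⟩
  · obtain ⟨c, hc⟩ := hconst hvan.boundedAtInf
    rw [hc z hz, hvan.eq_zero_of_eqOn_const hc]
  · obtain ⟨c, hc⟩ := hconst hb
    rw [hc z hz, eq_zero_of_eqOn_const_of_ne_one hmod hv hc]

/-- Forms of weight `0` with a unitary character: a vanishing one is zero; a bounded one is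
constant for the trivial character and zero otherwise. -/
theorem weight_zero_multiplier_classification
    (v : SL2Z →* ℂ) (hv : ∀ A : SL2Z, ‖v A‖ = 1)
    (f : ℂ → ℂ) (hf : HolOn f)
    (hmod : ∀ A : SL2Z, ∀ z ∈ UHP, f (moeb A z) = v A * f z) :
    (VanishAtInf f → ∀ z ∈ UHP, f z = 0) ∧
    (BoundedAtInf f →
      (v = 1 → ∃ c : ℂ, ∀ z ∈ UHP, f z = c) ∧
      (v ≠ 1 → ∀ z ∈ UHP, f z = 0)) :=
  weight_zero_multiplier_classification_general v f hf hmod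

end MLDE
end
end

section
/- Let m, n ∈ ℤ_{≥0} and N ∈ ℤ_{>0}, and suppose that E4^m·E6^n satisfies a monic modular linear differential equation of weight 4m+6n and order N; that is, there exist modular forms g_i ∈ M_{2i} for 1 ≤ i ≤ N such that D_{4m+6n}^{(N)}(E4^m E6^n) + Σ_{i=1}^{N} g_i · D_{4m+6n}^{(N−i)}(E4^m E6^n) = 0. Then N ≥ max{m, n} + 1. -/
/-!
`E₆` vanishes at `i` (fixed by `S`, with automorphy factor `i` and `i⁶ = -1`) and `E₄` vanishes
at `ρ` (fixed by `ST`, with automorphy factor `ρ + 1` and `(ρ + 1)⁴ = ρ² ≠ 1`); neither vanishes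
identically, so `f = E₄^m E₆^n` has a zero of finite order `≥ n` at `i` and `≥ m` at `ρ`.
At a zero of order `R ≥ 1` the Ramanujan–Serre derivative lowers the order by exactly one, because
the `E₂`-term vanishes to higher order than `f'`. So if `N ≤ R`, the leading term `D^{(N)} f` of the
equation has order exactly `R - N` while every `gᵢ · D^{(N-i)} f` has order `≥ R - N + i`, and the
equation cannot hold near the zero. Hence `N > n` and `N > m`.
-/

open Complex Filter
open scoped Classical

noncomputable section

namespace MLDE

open scoped Topology

section AnalyticOrder

variable {𝕜 E : Type*} [NontriviallyNormedField 𝕜] [NormedAddCommGroup E] [NormedSpace 𝕜 E]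
  {z₀ : 𝕜}

lemma le_analyticOrderAt_sum {ι : Type*} {s : Finset ι} {F : ι → 𝕜 → E} {n : ℕ∞}
    (h : ∀ i ∈ s, n ≤ analyticOrderAt (F i) z₀) :
    n ≤ analyticOrderAt (fun z => ∑ i ∈ s, F i z) z₀ := by
  classical
  induction s using Finset.induction_on with
  | empty => rw [analyticOrderAt_eq_top.mpr (.of_forall fun _ => Finset.sum_empty)]; exact le_top
  | insert i s hi ih =>
    simp only [Finset.sum_insert hi]
    exact (le_min (h i (Finset.mem_insert_self i s))
      (ih fun j hj => h j (Finset.mem_insert_of_mem hj))).trans le_analyticOrderAt_add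

lemma le_analyticOrderAt_mul_pow {f g : 𝕜 → 𝕜} (hf : AnalyticAt 𝕜 f z₀) (hg : AnalyticAt 𝕜 g z₀)
    (hg₀ : g z₀ = 0) (n : ℕ) : (n : ℕ∞) ≤ analyticOrderAt (f * g ^ n) z₀ := by
  rw [analyticOrderAt_mul hf (hg.pow n), analyticOrderAt_pow hg, nsmul_eq_mul]
  have hg₁ : 1 ≤ analyticOrderAt g z₀ :=
    Order.one_le_iff_ne_zero.mpr (hg.analyticOrderAt_ne_zero.mpr hg₀)
  calc (n : ℕ∞) = n * 1 := (mul_one _).symm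
    _ ≤ n * analyticOrderAt g z₀ := by gcongr
    _ ≤ _ := le_add_self

end AnalyticOrder

section SerreDerivative

variable {k : ℝ} {f : ℂ → ℂ} {z₀ : ℂ}

lemma analyticAt_serreD (hE2 : AnalyticAt ℂ E2 z₀) (hf : AnalyticAt ℂ f z₀) :
    AnalyticAt ℂ (serreD k f) z₀ := by
  unfold serreD
  fun_prop

lemma analyticAt_serreDIter (hE2 : AnalyticAt ℂ E2 z₀) (hf : AnalyticAt ℂ f z₀) :
    ∀ j, AnalyticAt ℂ (serreDIter k j f) z₀
  | 0 => hf
  | j + 1 => analyticAt_serreD hE2 (analyticAt_serreDIter hE2 hf j)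

lemma analyticOrderAt_serreD (hE2 : AnalyticAt ℂ E2 z₀) (hf : AnalyticAt ℂ f z₀) {r : ℕ}
    (hr : analyticOrderAt f z₀ = r + 1) : analyticOrderAt (serreD k f) z₀ = r := by
  set c : ℂ := (2 * (Real.pi : ℂ) * Complex.I)⁻¹
  have hsplit : serreD k f = (fun _ => c) * deriv f + (fun z => -((k : ℂ) / 12) * E2 z) * f := by
    funext z
    simp only [serreD, Pi.add_apply, Pi.mul_apply]
    ring
  have hderiv : analyticOrderAt ((fun _ => c) * deriv f) z₀ = r := by
    rw [analyticOrderAt_mul analyticAt_const hf.deriv, analyticOrderAt_deriv_of_pos hf hr,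
      analyticAt_const.analyticOrderAt_eq_zero.mpr (by simp [c, Real.pi_ne_zero]), zero_add]
  have hE2term : (r : ℕ∞) < analyticOrderAt ((fun z => -((k : ℂ) / 12) * E2 z) * f) z₀ := by
    rw [analyticOrderAt_mul (by fun_prop) hf, hr]
    exact (Nat.cast_lt.mpr r.lt_succ_self).trans_le le_add_self
  rw [hsplit, analyticOrderAt_add_eq_left_of_lt (hderiv ▸ hE2term), hderiv]

lemma analyticOrderAt_serreDIter (hE2 : AnalyticAt ℂ E2 z₀) (hf : AnalyticAt ℂ f z₀) {R : ℕ}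
    (hR : analyticOrderAt f z₀ = R) :
    ∀ j ≤ R, analyticOrderAt (serreDIter k j f) z₀ = (R - j : ℕ)
  | 0, _ => hR
  | j + 1, hj => analyticOrderAt_serreD hE2 (analyticAt_serreDIter hE2 hf j)
      (by rw [analyticOrderAt_serreDIter hE2 hf hR j (by omega)]; norm_cast; omega)

end SerreDerivative

theorem analyticOrderAt_lt_of_mlde {k : ℝ} {N : ℕ} {f : ℂ → ℂ} {g : ℕ → ℂ → ℂ} {z₀ : ℂ}
    (hE2 : AnalyticAt ℂ E2 z₀) (hf : AnalyticAt ℂ f z₀) (hfin : analyticOrderAt f z₀ ≠ ⊤)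
    (hg : ∀ i ∈ Finset.Icc 1 N, AnalyticAt ℂ (g i) z₀)
    (hmlde : ∀ᶠ z in 𝓝 z₀, serreDIter k N f z +
      ∑ i ∈ Finset.Icc 1 N, g i z * serreDIter k (N - i) f z = 0) :
    analyticOrderAt f z₀ < N := by
  obtain ⟨R, hR⟩ := ENat.ne_top_iff_exists.mp hfin
  rw [← hR, Nat.cast_lt]
  by_contra! hNR
  have hlead := analyticOrderAt_serreDIter (k := k) hE2 hf hR.symm N hNR
  have hlower : ((R - N + 1 : ℕ) : ℕ∞) ≤ analyticOrderAt
      (fun z => ∑ i ∈ Finset.Icc 1 N, g i z * serreDIter k (N - i) f z) z₀ := by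
    refine le_analyticOrderAt_sum (F := fun i => g i * serreDIter k (N - i) f) fun i hi => ?_
    obtain ⟨hi1, hiN⟩ := Finset.mem_Icc.mp hi
    rw [analyticOrderAt_mul (hg i hi) (analyticAt_serreDIter hE2 hf _),
      analyticOrderAt_serreDIter hE2 hf hR.symm _ (by omega)]
    exact (Nat.cast_le.mpr (by omega)).trans le_add_self
  have hEq : serreDIter k N f =ᶠ[𝓝 z₀]
      -fun z => ∑ i ∈ Finset.Icc 1 N, g i z * serreDIter k (N - i) f z :=
    hmlde.mono fun z hz => eq_neg_of_add_eq_zero_left hz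
  rw [← analyticOrderAt_neg, ← analyticOrderAt_congr hEq, hlead] at hlower
  exact absurd (Nat.cast_le.mp hlower) (by omega)

open UpperHalfPlane hiding I
open ModularForm ModularGroup
open scoped Manifold MatrixGroups

lemma isOpen_UHP : IsOpen UHP := isOpen_lt continuous_const continuous_im

lemma coe_mem_UHP (z : ℍ) : (z : ℂ) ∈ UHP := z.coe_im_pos

lemma IsModularForm.analyticAt {k : ℤ} {f : ℂ → ℂ} (hf : IsModularForm k f) {z : ℂ}
    (hz : z ∈ UHP) : AnalyticAt ℂ f z :=
  hf.1.analyticAt (isOpen_UHP.mem_nhds hz)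

lemma analyticOnNhd_UHP_of_mdifferentiable {f : ℂ → ℂ} {F : ℍ → ℂ} (hF : MDiff F)
    (hf : ∀ z : ℍ, f z = F z) : AnalyticOnNhd ℂ f UHP := by
  refine (DifferentiableOn.congr (mdifferentiable_iff.mp hF) fun z hz => ?_).analyticOnNhd
    isOpen_UHP
  simpa [ofComplex_apply_of_im_pos hz] using hf ⟨z, hz⟩

lemma analyticOrderAt_ne_top_of_modularForm {k : ℤ} {F : ModularForm 𝒮ℒ k} (hF : F ≠ 0)
    {f : ℂ → ℂ} (hf : ∀ z : ℍ, f z = F z) (z : ℍ) : analyticOrderAt f z ≠ ⊤ := by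
  have hana := analyticOnNhd_UHP_of_mdifferentiable (ModularFormClass.holo F) hf
  obtain ⟨w, hw⟩ := DFunLike.ne_iff.mp hF
  refine hana.analyticOrderAt_ne_top_of_isPreconnected (convex_halfSpace_im_gt 0).isPreconnected
    (coe_mem_UHP w) (coe_mem_UHP z) ?_
  rw [(hana w (coe_mem_UHP w)).analyticOrderAt_eq_zero.mpr (by simpa [hf] using hw)]
  exact ENat.zero_ne_top

lemma modularForm_apply_eq_of_smul_eq {k : ℤ} (F : ModularForm 𝒮ℒ k) {γ : SL2Z} {z : ℍ}
    (hγ : γ • z = z) : F z = ((γ 1 0 : ℂ) * z + γ 1 1) ^ k * F z := by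
  have h := SlashInvariantForm.slash_action_eqn' F (MonoidHom.mem_range.mpr ⟨γ, rfl⟩) z
  simp only [Matrix.SpecialLinearGroup.mapGL_coe_matrix] at h
  calc F z = F (γ • z) := by rw [hγ]
    _ = _ := h

-- The normalising constant `-2k / B_k` is the first `q`-coefficient; reading it off there
-- (240 for `E₄`, -504 for `E₆`) avoids evaluating Bernoulli numbers.
lemma E_eq_of_qExpansion_coeff_one {k : ℕ} (hk : 3 ≤ k) (hk2 : Even k) {c : ℂ}
    (hc : (qExpansion 1 (E hk)).coeff 1 = c) (z : ℍ) :
    E hk z = 1 + c * ∑' n : ℕ, (ArithmeticFunction.sigma (k - 1) (n + 1) : ℂ) * qq z ^ (n + 1) := by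
  rw [EisensteinSeries.E_qExpansion_coeff hk hk2] at hc
  simp only [EisensteinSeries.q_expansion_bernoulli hk hk2, zpow_natCast, ← hc,
    tsum_pnat_eq_tsum_succ
      (f := fun n => (ArithmeticFunction.sigma (k - 1) n : ℂ) * cexp (2 * Real.pi * I * z) ^ n)]
  simp [qq, sub_eq_add_neg]

lemma E2_coe (z : ℍ) : E2 z = EisensteinSeries.E2 z := by
  rw [EisensteinSeries.E2_eq_tsum_cexp, tsum_pnat_eq_tsum_succ
    (f := fun n => (ArithmeticFunction.sigma 1 n : ℂ) * cexp (2 * Real.pi * I * z) ^ n)]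
  simp [E2, qq]

lemma E4_coe (z : ℍ) : E4 z = E₄ z := by
  rw [E_eq_of_qExpansion_coeff_one _ ⟨2, rfl⟩ E₄_qExpansion_coeff_one]
  rfl

lemma E6_coe (z : ℍ) : E6 z = E₆ z := by
  rw [E_eq_of_qExpansion_coeff_one _ ⟨3, rfl⟩ E₆_qExpansion_coeff_one, E6]
  ring

lemma analyticOnNhd_E2 : AnalyticOnNhd ℂ E2 UHP :=
  analyticOnNhd_UHP_of_mdifferentiable E2_mdifferentiable E2_coe

lemma analyticOnNhd_E4 : AnalyticOnNhd ℂ E4 UHP :=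
  analyticOnNhd_UHP_of_mdifferentiable (ModularFormClass.holo E₄) E4_coe

lemma analyticOnNhd_E6 : AnalyticOnNhd ℂ E6 UHP :=
  analyticOnNhd_UHP_of_mdifferentiable (ModularFormClass.holo E₆) E6_coe

lemma analyticOrderAt_E4_pow_mul_E6_pow_ne_top (m n : ℕ) (z : ℍ) :
    analyticOrderAt (E4 ^ m * E6 ^ n) z ≠ ⊤ := by
  have h4 := analyticOnNhd_E4 z (coe_mem_UHP z)
  have h6 := analyticOnNhd_E6 z (coe_mem_UHP z)
  rw [analyticOrderAt_mul (h4.pow m) (h6.pow n), analyticOrderAt_pow h4, analyticOrderAt_pow h6,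
    nsmul_eq_mul, nsmul_eq_mul]
  exact WithTop.add_ne_top.mpr
    ⟨WithTop.mul_ne_top (ENat.natCast_ne_top m)
      (analyticOrderAt_ne_top_of_modularForm (EisensteinSeries.E_ne_zero _ ⟨2, rfl⟩) E4_coe z),
    WithTop.mul_ne_top (ENat.natCast_ne_top n)
      (analyticOrderAt_ne_top_of_modularForm (EisensteinSeries.E_ne_zero _ ⟨3, rfl⟩) E6_coe z)⟩

lemma coe_add_intCast_ne_zero (z : ℍ) (a : ℤ) : (z : ℂ) + a ≠ 0 := fun h => by
  simpa using z.im_pos.ne' (by simpa using congrArg Complex.im h)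

lemma S_smul_I : S • UpperHalfPlane.I = UpperHalfPlane.I := by
  rw [modular_S_smul]
  ext
  simp

lemma S_mul_T_smul_ρ : (S * T) • ρ = ρ := by
  have h : (-1 : ℂ) / (ρ + 1) = ρ := by
    rw [div_eq_iff (by exact_mod_cast coe_add_intCast_ne_zero ρ 1)]
    linear_combination -ρ_sq
  rw [UpperHalfPlane.ext_iff, coe_specialLinearGroup_apply]
  simpa using h

lemma E6_I : E6 (UpperHalfPlane.I : ℂ) = 0 := by
  have h : E₆ UpperHalfPlane.I = -E₆ UpperHalfPlane.I := by
    simpa [coe_S] using modularForm_apply_eq_of_smul_eq E₆ S_smul_I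
  rw [E6_coe]
  linear_combination h / 2

lemma E4_ρ : E4 ρ = 0 := by
  have h : E₄ ρ = (ρ + 1 : ℂ) ^ 4 * E₄ ρ := by
    simpa using modularForm_apply_eq_of_smul_eq E₄ S_mul_T_smul_ρ
  rw [E4_coe]
  refine (mul_eq_zero.mp ?_).resolve_left (by exact_mod_cast coe_add_intCast_ne_zero ρ 2)
  -- `(ρ + 1)⁴ = ρ² = -ρ - 1` turns `h` into `(ρ + 2) E₄(ρ) = 0`.
  linear_combination h + ((ρ : ℂ) ^ 2 + 3 * ρ + 2) * E₄ ρ * ρ_sq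

theorem order_lower_bound_E4_E6_general (m n N : ℕ)
    (g : ℕ → (ℂ → ℂ)) (hg : ∀ i : ℕ, 1 ≤ i → i ≤ N → IsModularForm (2 * i) (g i))
    (hmlde : ∀ z ∈ UHP,
      serreDIter ((4 * m + 6 * n : ℕ) : ℝ) N (fun w : ℂ => E4 w ^ m * E6 w ^ n) z +
        ∑ i ∈ Finset.Icc 1 N,
          g i z * serreDIter ((4 * m + 6 * n : ℕ) : ℝ) (N - i)
            (fun w : ℂ => E4 w ^ m * E6 w ^ n) z = 0) :
    max m n + 1 ≤ N := by
  have hE4 (z : ℍ) := analyticOnNhd_E4 z (coe_mem_UHP z)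
  have hE6 (z : ℍ) := analyticOnNhd_E6 z (coe_mem_UHP z)
  have hlt (z : ℍ) : analyticOrderAt (fun w : ℂ => E4 w ^ m * E6 w ^ n) z < N :=
    analyticOrderAt_lt_of_mlde (analyticOnNhd_E2 z (coe_mem_UHP z))
      (((hE4 z).pow m).mul ((hE6 z).pow n)) (analyticOrderAt_E4_pow_mul_E6_pow_ne_top m n z)
      (fun i hi => (hg i (Finset.mem_Icc.mp hi).1 (Finset.mem_Icc.mp hi).2).analyticAt
        (coe_mem_UHP z))
      (Filter.eventually_of_mem (isOpen_UHP.mem_nhds (coe_mem_UHP z)) hmlde)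
  have hn : (n : ℕ∞) ≤ analyticOrderAt (E4 ^ m * E6 ^ n) UpperHalfPlane.I :=
    le_analyticOrderAt_mul_pow ((hE4 _).pow m) (hE6 _) E6_I n
  have hm : (m : ℕ∞) ≤ analyticOrderAt (E6 ^ n * E4 ^ m) ρ :=
    le_analyticOrderAt_mul_pow ((hE6 _).pow n) (hE4 _) E4_ρ m
  rw [mul_comm] at hm
  have hnN : n < N := by exact_mod_cast hn.trans_lt (hlt _)
  have hmN : m < N := by exact_mod_cast hm.trans_lt (hlt _)
  omega

/-- Lower bound for the order of a monic MLDE of weight `4m + 6n` satisfied by `E₄^m E₆^n`. -/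
theorem order_lower_bound_E4_E6 (m n N : ℕ) (hN : 0 < N)
    (g : ℕ → (ℂ → ℂ)) (hg : ∀ i : ℕ, 1 ≤ i → i ≤ N → IsModularForm (2 * i) (g i))
    (hmlde : ∀ z ∈ UHP,
      serreDIter ((4 * m + 6 * n : ℕ) : ℝ) N (fun w : ℂ => E4 w ^ m * E6 w ^ n) z +
        ∑ i ∈ Finset.Icc 1 N,
          g i z * serreDIter ((4 * m + 6 * n : ℕ) : ℝ) (N - i)
            (fun w : ℂ => E4 w ^ m * E6 w ^ n) z = 0) :
    max m n + 1 ≤ N :=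
  order_lower_bound_E4_E6_general m n N g hg hmlde

end MLDE
end
end
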